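/- The function η(x) = e^{−(2x³/3 + x²)/c} ∫_{−∞}^x e^{(2x'³/3 + x'²)/c} dx', with c = τ(A+2B) > 0, is well-defined (the integral converges), strictly positive, and satisfies η(x) = O(x^{−2}) as |x| → ∞; more precisely x²η(x) → c/2 as x → +∞ and as x → −∞. -/

import Mathlib

open MeasureTheory Filter

/-- The (unnormalized) invariant density of the 1d dispersion process. -/
noncomputable def invDensity (c : ℝ) (x : ℝ) : ℝ :=
  Real.exp (-(2 * x ^ 3 / 3 + x ^ 2) / c) *
    ∫ t in Set.Iic x, Real.exp ((2 * t ^ 3 / 3 + t ^ 2) / c)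

/-!
With `V(x) = (2x³/3 + x²)/c`, the quantity `x² η(x)` is the quotient of `F(x) = ∫_{-∞}^x e^V` by
`e^{V(x)} / x²`. Since `F' = e^V` and `(e^V / x²)' = e^V (V'(x)/x² - 2/x³)`, the quotient of the
derivatives is `1 / (V'(x)/x² - 2/x³) → c/2` at both ends, so both tails follow from L'Hôpital's
rule: of type `∞/∞` at `+∞` and `0/0` at `-∞`. The integral converges because `V(t) ≤ t` far out
on the negative half-line.
-/

open Set Real Topology

namespace HasDerivAt

variable {f g f' g' : ℝ → ℝ}

theorem eventually_div_lt_of_deriv_le (hff' : ∀ᶠ x in atTop, HasDerivAt f (f' x) x)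
    (hgg' : ∀ᶠ x in atTop, HasDerivAt g (g' x) x) (hgtop : Tendsto g atTop atTop) {K K' : ℝ}
    (hK : ∀ᶠ x in atTop, f' x ≤ K * g' x) (hKK' : K < K') :
    ∀ᶠ x in atTop, f x / g x < K' := by
  obtain ⟨a, ha⟩ := eventually_atTop.1 (hff'.and (hgg'.and hK))
  have hanti : AntitoneOn (fun x => f x - K * g x) (Ici a) := by
    have hderiv : ∀ x ∈ Ici a, HasDerivAt (fun x => f x - K * g x) (f' x - K * g' x) x :=
      fun x hx => (ha x hx).1.sub ((ha x hx).2.1.const_mul K)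
    refine antitoneOn_of_hasDerivWithinAt_nonpos (convex_Ici a)
      (fun x hx => (hderiv x hx).continuousAt.continuousWithinAt)
      (fun x hx => (hderiv x (interior_subset hx)).hasDerivWithinAt)
      (fun x hx => sub_nonpos.2 (ha x (interior_subset hx)).2.2)
  have hrest : Tendsto (fun x => (f a - K * g a) / g x) atTop (𝓝 0) :=
    tendsto_const_nhds.div_atTop hgtop
  filter_upwards [eventually_ge_atTop a, hgtop.eventually_gt_atTop 0,
    hrest.eventually (gt_mem_nhds (sub_pos.2 hKK'))] with x hax hgx hrx
  have hfx : f x - K * g x ≤ f a - K * g a := hanti self_mem_Ici hax hax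
  rw [div_lt_iff₀ hgx] at hrx ⊢
  linarith

theorem lhopital_atTop_of_tendsto_atTop {l : ℝ} (hff' : ∀ᶠ x in atTop, HasDerivAt f (f' x) x)
    (hgg' : ∀ᶠ x in atTop, HasDerivAt g (g' x) x) (hg' : ∀ᶠ x in atTop, 0 < g' x)
    (hgtop : Tendsto g atTop atTop) (hdiv : Tendsto (fun x => f' x / g' x) atTop (𝓝 l)) :
    Tendsto (fun x => f x / g x) atTop (𝓝 l) := by
  have eventually_lt : ∀ {f f' : ℝ → ℝ} {l : ℝ}, (∀ᶠ x in atTop, HasDerivAt f (f' x) x) →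
      Tendsto (fun x => f' x / g' x) atTop (𝓝 l) → ∀ K' > l, ∀ᶠ x in atTop, f x / g x < K' := by
    intro f f' l hff' hdiv K' hK'
    obtain ⟨K, hlK, hKK'⟩ := exists_between hK'
    refine eventually_div_lt_of_deriv_le hff' hgg' hgtop ?_ hKK'
    filter_upwards [hdiv.eventually (gt_mem_nhds hlK), hg'] with x hx hgx
    exact ((div_lt_iff₀ hgx).1 hx).le
  refine tendsto_order.2 ⟨fun K' hK' => ?_, eventually_lt hff' hdiv⟩
  have hneg := eventually_lt (hff'.mono fun x hx => hx.neg) (by simpa only [neg_div] using hdiv.neg)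
    (-K') (neg_lt_neg hK')
  filter_upwards [hneg] with x hx
  rw [Pi.neg_apply, neg_div] at hx
  linarith

end HasDerivAt

theorem hasDerivAt_integral_Iic {E : Type*} [NormedAddCommGroup E] [NormedSpace ℝ E]
    [CompleteSpace E] {f : ℝ → E} (hf : Continuous f) (hfi : ∀ x, IntegrableOn f (Iic x)) (x : ℝ) :
    HasDerivAt (fun y => ∫ t in Iic y, f t) (f x) x := by
  have hsplit : (fun y => ∫ t in Iic y, f t) = fun y => (∫ t in Iic x, f t) + ∫ t in x..y, f t := by
    funext y
    rw [← intervalIntegral.integral_Iic_sub_Iic (hfi x) (hfi y), add_sub_cancel]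
  rw [hsplit]
  exact (hf.integral_hasStrictDerivAt x x).hasDerivAt.const_add _

namespace InvDensity

variable {c : ℝ}

noncomputable def potential (c t : ℝ) : ℝ := (2 * t ^ 3 / 3 + t ^ 2) / c

theorem potential_le_self (hc : 0 < c) {t : ℝ} (ht : t ≤ min (-3) (-c)) : potential c t ≤ t := by
  have h3 : t ≤ -3 := ht.trans (min_le_left _ _)
  have hct : t ≤ -c := ht.trans (min_le_right _ _)
  rw [potential, div_le_iff₀ hc]
  nlinarith

theorem self_le_potential (hc : 0 < c) {t : ℝ} (ht : max 0 c ≤ t) : t ≤ potential c t := by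
  have h0 : 0 ≤ t := (le_max_left _ _).trans ht
  have hct : c ≤ t := (le_max_right _ _).trans ht
  rw [potential, le_div_iff₀ hc]
  nlinarith

theorem continuous_exp_potential (c : ℝ) : Continuous fun t => exp (potential c t) := by
  unfold potential; fun_prop

theorem integrableOn_exp_potential (hc : 0 < c) (x : ℝ) :
    IntegrableOn (fun t => exp (potential c t)) (Iic x) := by
  set b := min x (min (-3) (-c))
  have htail : IntegrableOn (fun t => exp (potential c t)) (Iic b) := by
    refine (integrableOn_exp_Iic b).mono' (continuous_exp_potential c).aestronglyMeasurable ?_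
    filter_upwards [ae_restrict_mem measurableSet_Iic] with t ht
    rw [norm_of_nonneg (exp_pos _).le]
    exact exp_le_exp.2 (potential_le_self hc (le_trans ht (min_le_right _ _)))
  have hbody := (continuous_exp_potential c).integrableOn_Ioc (μ := volume) (a := b) (b := x)
  rw [← Iic_union_Ioc_eq_Iic (min_le_left x _)]
  exact htail.union hbody

theorem hasDerivAt_potential (c t : ℝ) :
    HasDerivAt (potential c) ((2 * t ^ 2 + 2 * t) / c) t := by
  have h := (((hasDerivAt_pow 3 t).const_mul 2).div_const 3).add (hasDerivAt_pow 2 t)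
  exact (h.div_const c).congr_deriv (by push_cast; ring)

noncomputable def rate (c u : ℝ) : ℝ := (2 + 2 * u) / c - 2 * u ^ 3

theorem hasDerivAt_exp_potential_div_sq {x : ℝ} (hx : x ≠ 0) :
    HasDerivAt (fun x => exp (potential c x) / x ^ 2) (exp (potential c x) * rate c x⁻¹) x := by
  refine ((hasDerivAt_potential c x).exp.div (hasDerivAt_pow 2 x) (pow_ne_zero 2 hx)).congr_deriv ?_
  rw [rate]
  field_simp
  ring

theorem tendsto_rate {l : Filter ℝ} (hl : Tendsto (fun x : ℝ => x⁻¹) l (𝓝 0)) :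
    Tendsto (fun x => rate c x⁻¹) l (𝓝 (2 / c)) := by
  have h : Continuous (rate c) := by unfold rate; fun_prop
  have h0 : rate c 0 = 2 / c := by simp [rate]
  exact h0 ▸ (h.tendsto 0).comp hl

theorem invDensity_pos (hc : 0 < c) (x : ℝ) : 0 < invDensity c x := by
  have : NeZero (volume.restrict (Iic x)) := ⟨by simp⟩
  exact mul_pos (exp_pos _) (integral_exp_pos (integrableOn_exp_potential hc x))

theorem sq_mul_invDensity {x : ℝ} (hx : x ≠ 0) :
    x ^ 2 * invDensity c x =
      (∫ t in Iic x, exp (potential c t)) / (exp (potential c x) / x ^ 2) := by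
  change x ^ 2 * (exp (-(2 * x ^ 3 / 3 + x ^ 2) / c) * ∫ t in Iic x, exp (potential c t)) = _
  rw [neg_div, exp_neg, ← potential]
  field_simp

theorem hasDerivAt_integral_exp_potential (hc : 0 < c) (x : ℝ) :
    HasDerivAt (fun y => ∫ t in Iic y, exp (potential c t)) (exp (potential c x)) x :=
  hasDerivAt_integral_Iic (continuous_exp_potential c) (integrableOn_exp_potential hc) x

theorem tendsto_exp_potential_div_sq_atTop (hc : 0 < c) :
    Tendsto (fun x => exp (potential c x) / x ^ 2) atTop atTop := by
  refine tendsto_atTop_mono' _ ?_ (tendsto_exp_div_pow_atTop 2)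
  filter_upwards [eventually_ge_atTop (max 0 c)] with x hx
  exact div_le_div_of_nonneg_right (exp_le_exp.2 (self_le_potential hc hx)) (sq_nonneg x)

theorem tendsto_exp_potential_div_sq_atBot (hc : 0 < c) :
    Tendsto (fun x => exp (potential c x) / x ^ 2) atBot (𝓝 0) := by
  refine tendsto_of_tendsto_of_tendsto_of_le_of_le' tendsto_const_nhds tendsto_exp_atBot
    (Eventually.of_forall fun x => by positivity) ?_
  filter_upwards [eventually_le_atBot (min (-3) (-c))] with x hx
  have hx1 : 1 ≤ x ^ 2 := by nlinarith [min_le_left (-3) (-c)]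
  calc exp (potential c x) / x ^ 2 ≤ exp (potential c x) := div_le_self (exp_pos _).le hx1
    _ ≤ exp x := exp_le_exp.2 (potential_le_self hc hx)

theorem tendsto_exp_potential_div_deriv (hc : c ≠ 0) {l : Filter ℝ}
    (hl : Tendsto (fun x : ℝ => x⁻¹) l (𝓝 0)) :
    Tendsto (fun x => exp (potential c x) / (exp (potential c x) * rate c x⁻¹)) l (𝓝 (c / 2)) := by
  simp_rw [div_mul_cancel_left₀ (exp_pos _).ne']
  simpa only [inv_div] using (tendsto_rate hl).inv₀ (div_ne_zero two_ne_zero hc)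

theorem tendsto_sq_mul_invDensity_atTop (hc : 0 < c) :
    Tendsto (fun x => x ^ 2 * invDensity c x) atTop (𝓝 (c / 2)) := by
  have hrate_pos : ∀ᶠ x in atTop, 0 < rate c x⁻¹ :=
    (tendsto_rate tendsto_inv_atTop_zero).eventually (lt_mem_nhds (by positivity))
  refine (HasDerivAt.lhopital_atTop_of_tendsto_atTop
    (Eventually.of_forall (hasDerivAt_integral_exp_potential hc))
    ((eventually_ne_atTop 0).mono fun x hx => hasDerivAt_exp_potential_div_sq hx)
    (hrate_pos.mono fun x hx => mul_pos (exp_pos _) hx) (tendsto_exp_potential_div_sq_atTop hc)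
    (tendsto_exp_potential_div_deriv hc.ne' tendsto_inv_atTop_zero)).congr' ?_
  filter_upwards [eventually_ne_atTop 0] with x hx using (sq_mul_invDensity hx).symm

theorem tendsto_sq_mul_invDensity_atBot (hc : 0 < c) :
    Tendsto (fun x => x ^ 2 * invDensity c x) atBot (𝓝 (c / 2)) := by
  have hrate_pos : ∀ᶠ x in atBot, 0 < rate c x⁻¹ :=
    (tendsto_rate tendsto_inv_atBot_zero).eventually (lt_mem_nhds (by positivity))
  refine (HasDerivAt.lhopital_zero_atBot
    (Eventually.of_forall (hasDerivAt_integral_exp_potential hc))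
    ((eventually_ne_atBot 0).mono fun x hx => hasDerivAt_exp_potential_div_sq hx)
    (hrate_pos.mono fun x hx => (mul_pos (exp_pos _) hx).ne')
    (tendsto_integral_Iic_zero tendsto_id) (tendsto_exp_potential_div_sq_atBot hc)
    (tendsto_exp_potential_div_deriv hc.ne' tendsto_inv_atBot_zero)).congr' ?_
  filter_upwards [eventually_ne_atBot 0] with x hx using (sq_mul_invDensity hx).symm

end InvDensity

/-- the density `η` is well defined (the integral converges),
strictly positive, and satisfies `x² η(x) → c/2` as `x → ±∞`; in particular
`η(x) = O(x^{−2})` at infinity. -/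
theorem invDensity_tails (τ A B : ℝ) (hτ : 0 < τ) (hAB : 0 < A + 2 * B)
    (c : ℝ) (hc : c = τ * (A + 2 * B)) :
    (∀ x : ℝ, IntegrableOn
      (fun t => Real.exp ((2 * t ^ 3 / 3 + t ^ 2) / c)) (Set.Iic x)) ∧
    (∀ x : ℝ, 0 < invDensity c x) ∧
    Tendsto (fun x : ℝ => x ^ 2 * invDensity c x) atTop (nhds (c / 2)) ∧
    Tendsto (fun x : ℝ => x ^ 2 * invDensity c x) atBot (nhds (c / 2)) := by
  have hc0 : 0 < c := hc ▸ mul_pos hτ hAB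
  exact ⟨InvDensity.integrableOn_exp_potential hc0, InvDensity.invDensity_pos hc0,
    InvDensity.tendsto_sq_mul_invDensity_atTop hc0, InvDensity.tendsto_sq_mul_invDensity_atBot hc0⟩
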